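/- If Y ~ ESN_k(ξ, Ω, α, τ) with density f(y) = φ_k(y − ξ; Ω)·Φ(α₀ + αᵀω⁻¹(y−ξ))/Φ(τ), where ω = diag(Ω)^{1/2} and α₀ = τ√(1+αᵀΩ̄α) with Ω̄ = ω⁻¹Ωω⁻¹, then the cumulant generating function of Y is K(t) = ξᵀt + ½ tᵀΩt + log Φ(τ + δᵀωt) − log Φ(τ), where δ = Ω̄α/√(1+αᵀΩ̄α). -/

import Mathlib

/-!
Substituting `y = ξ + C x` with `Ω = C Cᵀ` turns `gaussPdf Ω (y - ξ)` into the standard normal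
density `∏ i, φ (x i)`, and completing the square turns the tilt `exp (tᵀ C x)` into the factor
`exp (tᵀ Ω t / 2)` and a shift of `x` by `Cᵀ t`. What remains is `E Φ (c + vᵀ Z)` with
`Z ~ N(0, I)`. As `vᵀ Z ~ N(0, vᵀ v)`, this is `P (W - vᵀ Z ≤ c) = Φ (c / √(1 + vᵀ v))` for an
independent `W ~ N(0, 1)`. For `v = Cᵀ ω⁻¹ α` one has `vᵀ v = αᵀ Ω̄ α`, and the argument of `Φ`
becomes `τ + δᵀ ω t`.
-/

open Matrix MeasureTheory Real

noncomputable def phi (x : ℝ) : ℝ := (Real.sqrt (2 * Real.pi))⁻¹ * Real.exp (-x ^ 2 / 2)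

noncomputable def Phi (x : ℝ) : ℝ := ∫ t in Set.Iic x, phi t

/-- Density of `N_k(0, Ω)`. -/
noncomputable def gaussPdf {k : ℕ} (Ω : Matrix (Fin k) (Fin k) ℝ) (z : Fin k → ℝ) : ℝ :=
  (2 * Real.pi) ^ (-(k : ℝ) / 2) * Ω.det ^ (-(1 : ℝ) / 2) *
    Real.exp (-(1 / 2) * (z ⬝ᵥ Ω⁻¹ *ᵥ z))

/-- Density of `ESN_k(ξ, Ω, α, τ)`. -/
noncomputable def esnPdfFull {k : ℕ} (ξ : Fin k → ℝ) (Ω : Matrix (Fin k) (Fin k) ℝ)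
    (α : Fin k → ℝ) (τ : ℝ) (y : Fin k → ℝ) : ℝ :=
  let ω : Matrix (Fin k) (Fin k) ℝ := Matrix.diagonal fun i => Real.sqrt (Ω i i)
  let Ωb : Matrix (Fin k) (Fin k) ℝ := ω⁻¹ * Ω * ω⁻¹
  gaussPdf Ω (y - ξ) *
    Phi (τ * Real.sqrt (1 + α ⬝ᵥ Ωb *ᵥ α) + α ⬝ᵥ (ω⁻¹ *ᵥ (y - ξ))) / Phi τ

open ProbabilityTheory

lemma phi_eq_gaussianPDFReal : phi = gaussianPDFReal 0 1 := by
  ext x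
  simp [phi, gaussianPDFReal]

@[fun_prop]
lemma continuous_phi : Continuous phi := by
  unfold phi; fun_prop

lemma phi_nonneg (x : ℝ) : 0 ≤ phi x := by
  rw [phi_eq_gaussianPDFReal]; exact gaussianPDFReal_nonneg _ _ _

lemma integrable_phi : Integrable phi := by
  rw [phi_eq_gaussianPDFReal]; exact integrable_gaussianPDFReal 0 1

lemma Phi_eq_gaussianReal (x : ℝ) : Phi x = (gaussianReal 0 1).real (Set.Iic x) := by
  rw [measureReal_def, gaussianReal_apply_eq_integral _ one_ne_zero,
    ENNReal.toReal_ofReal (setIntegral_nonneg measurableSet_Iic fun _ _ =>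
      gaussianPDFReal_nonneg _ _ _), Phi, phi_eq_gaussianPDFReal]

@[fun_prop]
lemma measurable_Phi : Measurable Phi := by
  refine Monotone.measurable fun a b hab => ?_
  rw [Phi_eq_gaussianReal, Phi_eq_gaussianReal]
  exact measureReal_mono (Set.Iic_subset_Iic.2 hab)

lemma Phi_pos (x : ℝ) : 0 < Phi x := by
  rw [Phi_eq_gaussianReal, measureReal_def]
  refine ENNReal.toReal_pos (fun h => ?_) (measure_ne_top _ _)
  simpa using gaussianReal_absolutelyContinuous' 0 one_ne_zero h

lemma gaussianReal_real_Iic {v : NNReal} (hv : v ≠ 0) (c : ℝ) :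
    (gaussianReal 0 v).real (Set.Iic c) = Phi (c / √v) := by
  have hsqrt : 0 < √(v : ℝ) := Real.sqrt_pos.2 (by positivity)
  have hmap : (gaussianReal 0 1).map (√(v : ℝ) * ·) = gaussianReal 0 v := by
    rw [gaussianReal_map_const_mul, mul_zero, mul_one]
    congr
    exact Real.sq_sqrt v.coe_nonneg
  rw [← hmap, map_measureReal_apply (by fun_prop) measurableSet_Iic, Phi_eq_gaussianReal]
  congr 1
  ext x
  simp [le_div_iff₀ hsqrt, mul_comm]

lemma integral_Phi_sub_gaussianReal (c : ℝ) (v : NNReal) :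
    ∫ x, Phi (c - x) ∂gaussianReal 0 v =
      (gaussianReal 0 v ∗ gaussianReal 0 1).real (Set.Iic c) := by
  rw [measureReal_def, Measure.conv, Measure.map_apply (by fun_prop) measurableSet_Iic,
    Measure.prod_apply (measurableSet_Iic.preimage (by fun_prop)),
    integral_eq_lintegral_of_nonneg_ae (.of_forall fun _ => (Phi_pos _).le)
      (by fun_prop : Measurable fun x => Phi (c - x)).aestronglyMeasurable]
  congr 1
  refine lintegral_congr fun x => ?_
  rw [Phi_eq_gaussianReal, ofReal_measureReal]
  congr 1
  ext y
  simp [le_sub_iff_add_le']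

lemma integral_Phi_add_gaussianReal (c : ℝ) (v : NNReal) :
    ∫ x, Phi (c + x) ∂gaussianReal 0 v = Phi (c / √(1 + v)) := by
  have hsymm : ∫ x, Phi (c + x) ∂gaussianReal 0 v = ∫ x, Phi (c - x) ∂gaussianReal 0 v := by
    conv_rhs => rw [← neg_zero, ← gaussianReal_map_neg]
    rw [integral_map (by fun_prop)
      (by fun_prop : Measurable fun x => Phi (c - x)).aestronglyMeasurable]
    simp_rw [sub_neg_eq_add]
  rw [hsymm, integral_Phi_sub_gaussianReal, gaussianReal_conv_gaussianReal, add_zero, add_comm,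
    gaussianReal_real_Iic (by positivity)]
  rfl

lemma pi_gaussianReal_eq_withDensity (ι : Type*) [Fintype ι] :
    Measure.pi (fun _ : ι => gaussianReal 0 1) =
      volume.withDensity fun x => ENNReal.ofReal (∏ i, phi (x i)) := by
  refine Measure.pi_eq fun s hs => ?_
  rw [withDensity_apply _ (MeasurableSet.univ_pi hs), ← ofReal_integral_eq_lintegral_ofReal,
    volume_pi, Measure.restrict_pi_pi, integral_fintype_prod_eq_prod (𝕜 := ℝ) (fun _ => phi),
    ENNReal.ofReal_prod_of_nonneg fun i _ => setIntegral_nonneg (hs i) fun x _ => phi_nonneg x]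
  · refine Finset.prod_congr rfl fun i _ => ?_
    rw [gaussianReal_apply_eq_integral _ one_ne_zero, phi_eq_gaussianPDFReal]
  · rw [volume_pi, Measure.restrict_pi_pi]
    exact Integrable.fintype_prod fun _ => integrable_phi.restrict
  · exact .of_forall fun x => Finset.prod_nonneg fun i _ => phi_nonneg _

lemma integral_pi_gaussianReal {ι : Type*} [Fintype ι] (f : (ι → ℝ) → ℝ) :
    ∫ x, f x ∂Measure.pi (fun _ : ι => gaussianReal 0 1) = ∫ x, (∏ i, phi (x i)) * f x := by
  rw [pi_gaussianReal_eq_withDensity, integral_withDensity_eq_integral_toReal_smul (by fun_prop)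
    (.of_forall fun _ => ENNReal.ofReal_lt_top)]
  simp_rw [smul_eq_mul, ENNReal.toReal_ofReal (Finset.prod_nonneg fun i _ => phi_nonneg _)]

lemma map_dotProduct_pi_gaussianReal {ι : Type*} [Fintype ι] (v : ι → ℝ) :
    (Measure.pi fun _ : ι => gaussianReal 0 1).map (v ⬝ᵥ ·) =
      gaussianReal 0 (v ⬝ᵥ v).toNNReal := by
  set L : StrongDual ℝ (EuclideanSpace ℝ ι) := innerSL ℝ (WithLp.toLp 2 v)
  have hL : (v ⬝ᵥ ·) = L ∘ WithLp.toLp 2 := by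
    ext x
    simp [L, EuclideanSpace.inner_toLp_toLp, dotProduct_comm]
  have hnorm : ‖L‖ ^ 2 = v ⬝ᵥ v := by
    rw [innerSL_apply_norm, ← real_inner_self_eq_norm_sq, EuclideanSpace.inner_toLp_toLp,
      star_trivial]
  rw [hL, ← Measure.map_map L.continuous.measurable (by fun_prop), map_pi_eq_stdGaussian,
    IsGaussian.map_eq_gaussianReal, integral_strongDual_stdGaussian, variance_dual_stdGaussian,
    hnorm]

lemma integral_prod_phi_mul_Phi {ι : Type*} [Fintype ι] (c : ℝ) (v : ι → ℝ) :
    ∫ x, (∏ i, phi (x i)) * Phi (c + v ⬝ᵥ x) = Phi (c / √(1 + v ⬝ᵥ v)) := by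
  rw [← integral_pi_gaussianReal, ← integral_map (by fun_prop)
      (by fun_prop : Measurable fun y => Phi (c + y)).aestronglyMeasurable,
    map_dotProduct_pi_gaussianReal, integral_Phi_add_gaussianReal,
    Real.coe_toNNReal _ (by simpa using dotProduct_self_star_nonneg v)]

lemma prod_phi_eq {ι : Type*} [Fintype ι] (x : ι → ℝ) :
    ∏ i, phi (x i) =
      (2 * π) ^ (-(Fintype.card ι : ℝ) / 2) * Real.exp (-(1 / 2) * (x ⬝ᵥ x)) := by
  have h2π : 0 ≤ 2 * π := by positivity
  simp only [phi]
  rw [Finset.prod_mul_distrib, Finset.prod_const, ← Real.exp_sum, Finset.card_univ, dotProduct,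
    Finset.mul_sum, inv_pow, Real.sqrt_eq_rpow, ← Real.rpow_natCast, ← Real.rpow_mul h2π,
    ← Real.rpow_neg h2π]
  congr 2
  · ring
  · exact Finset.sum_congr rfl fun i _ => by ring

lemma integral_exp_dotProduct_mul_prod_phi {ι : Type*} [Fintype ι] (s : ι → ℝ)
    (f : (ι → ℝ) → ℝ) :
    ∫ x, Real.exp (s ⬝ᵥ x) * ((∏ i, phi (x i)) * f x) =
      Real.exp ((1 / 2) * (s ⬝ᵥ s)) * ∫ x, (∏ i, phi (x i)) * f (s + x) := by
  have htilt : ∀ x : ι → ℝ, Real.exp (s ⬝ᵥ x) * ∏ i, phi (x i) =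
      Real.exp ((1 / 2) * (s ⬝ᵥ s)) * ∏ i, phi ((x - s) i) := by
    intro x
    rw [prod_phi_eq, prod_phi_eq, mul_left_comm, ← Real.exp_add, mul_left_comm (Real.exp _),
      ← Real.exp_add]
    congr 2
    simp only [sub_dotProduct, dotProduct_sub, dotProduct_comm s x]
    ring
  simp_rw [← mul_assoc, htilt, mul_assoc, integral_const_mul]
  congr 1
  rw [← integral_sub_right_eq_self (fun y => (∏ i, phi (y i)) * f (s + y)) s]
  simp only [add_sub_cancel]

lemma Matrix.PosSemidef.exists_mul_transpose_eq {n : Type*} [Fintype n] [DecidableEq n]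
    {A : Matrix n n ℝ} (hA : A.PosSemidef) : ∃ C : Matrix n n ℝ, C * Cᵀ = A := by
  open scoped MatrixOrder in
  obtain ⟨B, rfl⟩ := CStarAlgebra.nonneg_iff_eq_star_mul_self.mp hA.nonneg
  exact ⟨Bᵀ, by simp [star_eq_conjTranspose]⟩

lemma Matrix.mulVec_dotProduct {R m n : Type*} [CommSemiring R] [Fintype m] [Fintype n]
    (M : Matrix m n R) (x : n → R) (y : m → R) : (M *ᵥ x) ⬝ᵥ y = x ⬝ᵥ Mᵀ *ᵥ y := by
  rw [dotProduct_transpose_mulVec, dotProduct_comm]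

lemma integral_comp_mulVec {n : Type*} [Fintype n] [DecidableEq n] {M : Matrix n n ℝ}
    (hM : IsUnit M.det) (f : (n → ℝ) → ℝ) :
    ∫ x, f (M *ᵥ x) = |M.det|⁻¹ * ∫ x, f x := by
  have hemb : MeasurableEmbedding (toLin' M) :=
    (LinearMap.continuous_of_finiteDimensional _).measurableEmbedding
      (mulVec_injective_iff_isUnit.2 ((isUnit_iff_isUnit_det M).2 hM))
  rw [← abs_inv, ← ENNReal.toReal_ofReal (abs_nonneg _), ← smul_eq_mul, ← integral_smul_measure,
    ← Real.map_matrix_volume_pi_eq_smul_volume_pi hM.ne_zero, hemb.integral_map]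
  rfl

lemma det_mul_transpose_rpow_neg_half {n : Type*} [Fintype n] [DecidableEq n]
    (C : Matrix n n ℝ) : (C * Cᵀ).det ^ (-(1 : ℝ) / 2) = |C.det|⁻¹ := by
  rw [det_mul, det_transpose, neg_div, Real.rpow_neg (mul_self_nonneg _), ← Real.sqrt_eq_rpow,
    Real.sqrt_mul_self_eq_abs]

lemma gaussPdf_mul_transpose_mulVec {k : ℕ} {C : Matrix (Fin k) (Fin k) ℝ} (hC : IsUnit C.det)
    (x : Fin k → ℝ) : gaussPdf (C * Cᵀ) (C *ᵥ x) = |C.det|⁻¹ * ∏ i, phi (x i) := by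
  have hquad : (C *ᵥ x) ⬝ᵥ (C * Cᵀ)⁻¹ *ᵥ (C *ᵥ x) = x ⬝ᵥ x := by
    rw [dotProduct_mulVec, vecMul_mulVec, Matrix.mul_inv_rev, ← Matrix.mul_assoc,
      mul_nonsing_inv _ (by rwa [det_transpose]), Matrix.one_mul, dotProduct_mulVec, vecMul_vecMul,
      nonsing_inv_mul _ hC, vecMul_one]
  rw [gaussPdf, hquad, det_mul_transpose_rpow_neg_half, prod_phi_eq, Fintype.card_fin]
  ring

lemma integral_exp_mul_gaussPdf_mul_Phi {k : ℕ} {Ω : Matrix (Fin k) (Fin k) ℝ} (hΩ : Ω.PosDef)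
    (t b : Fin k → ℝ) (a : ℝ) :
    ∫ z, Real.exp (t ⬝ᵥ z) * gaussPdf Ω z * Phi (a + b ⬝ᵥ z) =
      Real.exp ((1 / 2) * (t ⬝ᵥ Ω *ᵥ t)) * Phi ((a + b ⬝ᵥ Ω *ᵥ t) / √(1 + b ⬝ᵥ Ω *ᵥ b)) := by
  obtain ⟨C, rfl⟩ := hΩ.posSemidef.exists_mul_transpose_eq
  have hC : IsUnit C.det := by
    have := hΩ.det_pos
    rw [det_mul, det_transpose] at this
    exact isUnit_iff_ne_zero.2 fun h => by simp [h] at this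
  have hquad : ∀ u w, (Cᵀ *ᵥ u) ⬝ᵥ (Cᵀ *ᵥ w) = u ⬝ᵥ (C * Cᵀ) *ᵥ w := fun u w => by
    rw [mulVec_dotProduct, transpose_transpose, mulVec_mulVec]
  calc ∫ z, Real.exp (t ⬝ᵥ z) * gaussPdf (C * Cᵀ) z * Phi (a + b ⬝ᵥ z)
      = |C.det| * ∫ x, Real.exp (t ⬝ᵥ C *ᵥ x) * gaussPdf (C * Cᵀ) (C *ᵥ x) *
          Phi (a + b ⬝ᵥ C *ᵥ x) := by
        rw [integral_comp_mulVec hC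
            (fun z => Real.exp (t ⬝ᵥ z) * gaussPdf (C * Cᵀ) z * Phi (a + b ⬝ᵥ z)),
          ← mul_assoc, mul_inv_cancel₀ (abs_ne_zero.2 hC.ne_zero), one_mul]
    _ = ∫ x, Real.exp ((Cᵀ *ᵥ t) ⬝ᵥ x) * ((∏ i, phi (x i)) * Phi (a + (Cᵀ *ᵥ b) ⬝ᵥ x)) := by
        rw [← integral_const_mul]
        refine integral_congr_ae (.of_forall fun x => ?_)
        simp only [gaussPdf_mul_transpose_mulVec hC, dotProduct_mulVec, mulVec_transpose]
        field_simp [abs_ne_zero.2 hC.ne_zero]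
    _ = _ := by
        simp_rw [integral_exp_dotProduct_mul_prod_phi, dotProduct_add, ← add_assoc]
        rw [integral_prod_phi_mul_Phi, hquad, hquad, hquad]

lemma integral_exp_mul_gaussPdf_sub_mul_Phi {k : ℕ} {Ω : Matrix (Fin k) (Fin k) ℝ}
    (hΩ : Ω.PosDef) (ξ t b : Fin k → ℝ) (a : ℝ) :
    ∫ y, Real.exp (t ⬝ᵥ y) * (gaussPdf Ω (y - ξ) * Phi (a + b ⬝ᵥ (y - ξ))) =
      Real.exp (ξ ⬝ᵥ t + (1 / 2) * (t ⬝ᵥ Ω *ᵥ t)) *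
        Phi ((a + b ⬝ᵥ Ω *ᵥ t) / √(1 + b ⬝ᵥ Ω *ᵥ b)) := by
  have hshift : ∀ y, Real.exp (t ⬝ᵥ y) * (gaussPdf Ω (y - ξ) * Phi (a + b ⬝ᵥ (y - ξ))) =
      Real.exp (ξ ⬝ᵥ t) * (Real.exp (t ⬝ᵥ (y - ξ)) * gaussPdf Ω (y - ξ) *
        Phi (a + b ⬝ᵥ (y - ξ))) := fun y => by
    rw [show t ⬝ᵥ y = ξ ⬝ᵥ t + t ⬝ᵥ (y - ξ) by rw [dotProduct_sub, dotProduct_comm ξ]; ring,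
      Real.exp_add]
    ring
  simp_rw [hshift]
  rw [integral_const_mul, integral_sub_right_eq_self
      (fun z => Real.exp (t ⬝ᵥ z) * gaussPdf Ω z * Phi (a + b ⬝ᵥ z)),
    integral_exp_mul_gaussPdf_mul_Phi hΩ, Real.exp_add, mul_assoc]

lemma Matrix.PosDef.isUnit_det_diagonal_sqrt {n : Type*} [Fintype n] [DecidableEq n]
    {Ω : Matrix n n ℝ} (hΩ : Ω.PosDef) : IsUnit (diagonal fun i => √(Ω i i)).det := by
  rw [det_diagonal]
  exact isUnit_iff_ne_zero.2
    (Finset.prod_ne_zero_iff.2 fun i _ => (Real.sqrt_pos.2 hΩ.diag_pos).ne')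

lemma Matrix.inv_mulVec_dotProduct_mulVec_inv_mulVec {R n : Type*} [CommRing R] [Fintype n]
    [DecidableEq n] {ω : Matrix n n R} (hωT : ωᵀ = ω) (Ω : Matrix n n R) (α : n → R) :
    (ω⁻¹ *ᵥ α) ⬝ᵥ Ω *ᵥ (ω⁻¹ *ᵥ α) = α ⬝ᵥ (ω⁻¹ * Ω * ω⁻¹) *ᵥ α := by
  rw [mulVec_dotProduct, transpose_nonsing_inv, hωT, mulVec_mulVec, mulVec_mulVec]

lemma Matrix.inv_mulVec_dotProduct_mulVec {R n : Type*} [CommRing R] [Fintype n] [DecidableEq n]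
    {ω Ω : Matrix n n R} (hωT : ωᵀ = ω) (hω : IsUnit ω.det) (hΩT : Ωᵀ = Ω) (α t : n → R) :
    (ω⁻¹ *ᵥ α) ⬝ᵥ Ω *ᵥ t = ((ω⁻¹ * Ω * ω⁻¹) *ᵥ α) ⬝ᵥ ω *ᵥ t := by
  rw [mulVec_dotProduct, mulVec_dotProduct, transpose_mul, transpose_mul, transpose_nonsing_inv,
    hωT, hΩT, mulVec_mulVec, mulVec_mulVec, Matrix.mul_assoc, Matrix.mul_assoc Ω,
    nonsing_inv_mul ω hω, Matrix.mul_one]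

theorem esn_cgf {k : ℕ} (ξ : Fin k → ℝ) (Ω : Matrix (Fin k) (Fin k) ℝ) (hΩ : Ω.PosDef)
    (α : Fin k → ℝ) (τ : ℝ)
    (ω : Matrix (Fin k) (Fin k) ℝ) (hω : ω = Matrix.diagonal fun i => Real.sqrt (Ω i i))
    (Ωb : Matrix (Fin k) (Fin k) ℝ) (hΩb : Ωb = ω⁻¹ * Ω * ω⁻¹)
    (δ : Fin k → ℝ) (hδ : δ = (Real.sqrt (1 + α ⬝ᵥ Ωb *ᵥ α))⁻¹ • (Ωb *ᵥ α)) (t : Fin k → ℝ) :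
    Real.log (∫ y : Fin k → ℝ, Real.exp (t ⬝ᵥ y) * esnPdfFull ξ Ω α τ y) =
      ξ ⬝ᵥ t + (1 / 2) * (t ⬝ᵥ Ω *ᵥ t) + Real.log (Phi (τ + δ ⬝ᵥ ω *ᵥ t)) -
        Real.log (Phi τ) := by
  have hωT : ωᵀ = ω := by rw [hω, diagonal_transpose]
  have hquad : (ω⁻¹ *ᵥ α) ⬝ᵥ Ω *ᵥ (ω⁻¹ *ᵥ α) = α ⬝ᵥ Ωb *ᵥ α :=
    hΩb ▸ inv_mulVec_dotProduct_mulVec_inv_mulVec hωT Ω α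
  have hcross : (ω⁻¹ *ᵥ α) ⬝ᵥ Ω *ᵥ t = (Ωb *ᵥ α) ⬝ᵥ ω *ᵥ t :=
    hΩb ▸ inv_mulVec_dotProduct_mulVec hωT (hω ▸ hΩ.isUnit_det_diagonal_sqrt) hΩ.isHermitian α t
  set r := √(1 + α ⬝ᵥ Ωb *ᵥ α)
  have hr : 0 < r := Real.sqrt_pos.2 <| by
    linarith [hquad ▸ hΩ.posSemidef.dotProduct_mulVec_nonneg (ω⁻¹ *ᵥ α)]
  have hpdf : ∀ y, esnPdfFull ξ Ω α τ y =
      gaussPdf Ω (y - ξ) * Phi (τ * r + (ω⁻¹ *ᵥ α) ⬝ᵥ (y - ξ)) / Phi τ := fun y => by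
    rw [mulVec_dotProduct, transpose_nonsing_inv, hωT]
    subst hω hΩb
    rfl
  have hmgf : ∫ y, Real.exp (t ⬝ᵥ y) * esnPdfFull ξ Ω α τ y =
      Real.exp (ξ ⬝ᵥ t + (1 / 2) * (t ⬝ᵥ Ω *ᵥ t)) * Phi (τ + δ ⬝ᵥ ω *ᵥ t) / Phi τ := by
    simp_rw [hpdf, mul_div_assoc', integral_div, integral_exp_mul_gaussPdf_sub_mul_Phi hΩ, hquad,
      hcross, hδ, smul_dotProduct, smul_eq_mul]
    rw [add_div, mul_div_cancel_right₀ _ hr.ne', div_eq_mul_inv _ r, mul_comm _ r⁻¹]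
  rw [hmgf, Real.log_div (mul_pos (Real.exp_pos _) (Phi_pos _)).ne' (Phi_pos τ).ne',
    Real.log_mul (Real.exp_ne_zero _) (Phi_pos _).ne', Real.log_exp]
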